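/- Let s ∈ ℝ and let a, b ∈ ℝ with b ≤ s < a. Then |g_s(b) − g_s(a) − (a·g_s(a) − Φ(s))·(b − a) − (b − s)| ≤ 2·(√(2π)/4 + |a| + (a − b))·(a − b)². -/

import Mathlib

/-!
On each side of `s` the Stein solution is a multiple of the Mills ratio
`R w = e^{w²/2} ∫_w^∞ e^{-u²/2} du`: `g_s = Φ(s) R` on `[s, ∞)` and `g_s w = (1 - Φ(s)) R(-w)`
on `(-∞, s]`. Both branches are smooth, agree at `s`, and there the derivative of the lower one
exceeds that of the upper one by `1`. The quantity to bound is therefore a Taylor remainder across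
a kink, at most `C (a - b)²` for any common bound `C` of the second derivatives of the branches on
`[b, a]`. The Mills ratio estimates `R w ≤ √(2π)/2` and `w R w ≤ 1` for `w ≥ 0`, together with
the symmetry `Φ(t) R(t) = (1 - Φ(t)) R(-t)`, bound these second derivatives by `√(2π)/2 + 2|t|`.
-/

open MeasureTheory

noncomputable def Phi (s : ℝ) : ℝ :=
  ((ProbabilityTheory.gaussianReal 0 1) (Set.Iic s)).toReal

noncomputable def steinG (s w : ℝ) : ℝ :=
  Real.exp (w ^ 2 / 2) *
    ∫ u in Set.Iic w, ((if u ≤ s then (1 : ℝ) else 0) - Phi s) * Real.exp (-u ^ 2 / 2)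

open Real Set Filter Topology

lemma abs_sub_le_of_abs_deriv_le {f f' : ℝ → ℝ} {x y C u v : ℝ}
    (hf : ∀ t ∈ Icc x y, HasDerivAt f (f' t) t) (hC : ∀ t ∈ Icc x y, |f' t| ≤ C)
    (hu : u ∈ Icc x y) (hv : v ∈ Icc x y) : |f u - f v| ≤ C * |u - v| := by
  simpa only [Real.norm_eq_abs] using (convex_Icc x y).norm_image_sub_le_of_norm_hasDerivWithin_le
    (fun t ht => (hf t ht).hasDerivWithinAt) (fun t ht => (Real.norm_eq_abs _).trans_le (hC t ht))
    hv hu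

lemma abs_sub_sub_mul_sub_le {f f' f'' : ℝ → ℝ} {x y C : ℝ} (hxy : x ≤ y)
    (hf : ∀ t ∈ Icc x y, HasDerivAt f (f' t) t)
    (hf' : ∀ t ∈ Icc x y, HasDerivAt f' (f'' t) t) (hC : ∀ t ∈ Icc x y, |f'' t| ≤ C) :
    |f x - f y - f' y * (x - y)| ≤ C * (y - x) ^ 2 := by
  have hx : x ∈ Icc x y := left_mem_Icc.mpr hxy
  have hy : y ∈ Icc x y := right_mem_Icc.mpr hxy
  have hC₀ : 0 ≤ C := (abs_nonneg _).trans (hC x hx)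
  have hslope : ∀ t ∈ Icc x y, |f' t - f' y * 1| ≤ C * (y - x) := fun t ht => by
    rw [mul_one]
    refine (abs_sub_le_of_abs_deriv_le hf' hC ht hy).trans (mul_le_mul_of_nonneg_left ?_ hC₀)
    rw [abs_sub_comm, abs_of_nonneg (sub_nonneg.mpr ht.2)]
    linarith [ht.1]
  have := abs_sub_le_of_abs_deriv_le (f := fun t => f t - f' y * t)
    (fun t ht => (hf t ht).sub ((hasDerivAt_id t).const_mul (f' y))) hslope hx hy
  rw [abs_sub_comm x y, abs_of_nonneg (sub_nonneg.mpr hxy)] at this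
  calc |f x - f y - f' y * (x - y)| = |f x - f' y * x - (f y - f' y * y)| := by ring_nf
    _ ≤ C * (y - x) * (y - x) := this
    _ = C * (y - x) ^ 2 := by ring

lemma abs_sub_sub_mul_sub_sub_mul_le_of_jump {f f' f'' g g' g'' : ℝ → ℝ} {b s a C d : ℝ}
    (hbs : b ≤ s) (hsa : s ≤ a)
    (hf : ∀ t ∈ Icc s a, HasDerivAt f (f' t) t)
    (hf' : ∀ t ∈ Icc s a, HasDerivAt f' (f'' t) t)
    (hf'' : ∀ t ∈ Icc s a, |f'' t| ≤ C)
    (hg : ∀ t ∈ Icc b s, HasDerivAt g (g' t) t)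
    (hg' : ∀ t ∈ Icc b s, HasDerivAt g' (g'' t) t)
    (hg'' : ∀ t ∈ Icc b s, |g'' t| ≤ C)
    (hval : g s = f s) (hjump : g' s = f' s + d) :
    |g b - f a - f' a * (b - a) - d * (b - s)| ≤ C * (a - b) ^ 2 := by
  have hs : s ∈ Icc s a := left_mem_Icc.mpr hsa
  have ha : a ∈ Icc s a := right_mem_Icc.mpr hsa
  have hC₀ : 0 ≤ C := (abs_nonneg _).trans (hf'' s hs)
  have hleft := abs_sub_sub_mul_sub_le hbs hg hg' hg''
  have hright := abs_sub_sub_mul_sub_le hsa hf hf' hf''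
  have hslope : |f' s - f' a| ≤ C * (a - s) := by
    simpa only [abs_sub_comm s a, abs_of_nonneg (sub_nonneg.mpr hsa)] using
      abs_sub_le_of_abs_deriv_le hf' hf'' hs ha
  have hsplit : g b - f a - f' a * (b - a) - d * (b - s) =
      (g b - g s - g' s * (b - s)) + (f s - f a - f' a * (s - a)) + (f' s - f' a) * (b - s) := by
    rw [hval, hjump]; ring
  calc |g b - f a - f' a * (b - a) - d * (b - s)|
      ≤ |g b - g s - g' s * (b - s)| + |f s - f a - f' a * (s - a)|
          + |f' s - f' a| * (s - b) := by
        rw [hsplit]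
        refine (abs_add_three _ _ _).trans_eq ?_
        rw [abs_mul, abs_sub_comm b s, abs_of_nonneg (sub_nonneg.mpr hbs)]
    _ ≤ C * (s - b) ^ 2 + C * (a - s) ^ 2 + C * (a - s) * (s - b) :=
        add_le_add (add_le_add hleft hright)
          (mul_le_mul_of_nonneg_right hslope (sub_nonneg.mpr hbs))
    _ ≤ C * (a - b) ^ 2 := by
        nlinarith [mul_nonneg hC₀ (mul_nonneg (sub_nonneg.mpr hsa) (sub_nonneg.mpr hbs))]

lemma exp_neg_sq_div_two_eq :
    (fun u : ℝ => exp (-u ^ 2 / 2)) = fun u => exp (-(1 / 2) * u ^ 2) := by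
  ext u; ring_nf

lemma integrable_exp_neg_sq_div_two : Integrable fun u : ℝ => exp (-u ^ 2 / 2) :=
  exp_neg_sq_div_two_eq ▸ integrable_exp_neg_mul_sq (by norm_num)

lemma integral_exp_neg_sq_div_two : ∫ u, exp (-u ^ 2 / 2) = √(2 * π) := by
  rw [exp_neg_sq_div_two_eq, integral_gaussian]
  congr 1; field_simp

lemma integral_Ioi_zero_exp_neg_sq_div_two :
    ∫ u in Ioi 0, exp (-u ^ 2 / 2) = √(2 * π) / 2 := by
  rw [exp_neg_sq_div_two_eq, integral_gaussian_Ioi]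
  congr 2; field_simp

lemma Phi_eq_integral_Iic (s : ℝ) : Phi s = (∫ u in Iic s, exp (-u ^ 2 / 2)) / √(2 * π) := by
  rw [Phi, ProbabilityTheory.gaussianReal_apply_eq_integral 0 one_ne_zero,
    ENNReal.toReal_ofReal (setIntegral_nonneg measurableSet_Iic fun x _ =>
      ProbabilityTheory.gaussianPDFReal_nonneg 0 1 x)]
  simp [ProbabilityTheory.gaussianPDFReal, integral_const_mul, div_eq_inv_mul]

lemma one_sub_Phi_eq_integral_Ioi (s : ℝ) :
    1 - Phi s = (∫ u in Ioi s, exp (-u ^ 2 / 2)) / √(2 * π) := by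
  have htotal := intervalIntegral.integral_Iic_add_Ioi (b := s)
    integrable_exp_neg_sq_div_two.integrableOn integrable_exp_neg_sq_div_two.integrableOn
  rw [integral_exp_neg_sq_div_two] at htotal
  rw [Phi_eq_integral_Iic, eq_div_iff (by positivity), sub_mul, div_mul_cancel₀ _ (by positivity)]
  linarith

lemma Phi_eq_integral_Ioi (s : ℝ) :
    Phi s = (∫ u in Ioi (-s), exp (-u ^ 2 / 2)) / √(2 * π) := by
  rw [Phi_eq_integral_Iic, ← integral_comp_neg_Iic]
  simp only [neg_sq]

lemma Phi_neg (s : ℝ) : Phi (-s) = 1 - Phi s := by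
  rw [one_sub_Phi_eq_integral_Ioi, Phi_eq_integral_Ioi, neg_neg]

lemma Phi_nonneg (s : ℝ) : 0 ≤ Phi s := ENNReal.toReal_nonneg

lemma Phi_le_one (s : ℝ) : Phi s ≤ 1 := measureReal_le_one

lemma Phi_mono : Monotone Phi := fun _ _ h => measureReal_mono (Iic_subset_Iic.mpr h)

noncomputable def millsRatio (w : ℝ) : ℝ := exp (w ^ 2 / 2) * ∫ u in Ioi w, exp (-u ^ 2 / 2)

lemma exp_sq_div_two_mul_exp_neg (w : ℝ) : exp (w ^ 2 / 2) * exp (-w ^ 2 / 2) = 1 := by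
  rw [← exp_add, neg_div, add_neg_cancel, exp_zero]

lemma millsRatio_nonneg (w : ℝ) : 0 ≤ millsRatio w :=
  mul_nonneg (exp_pos _).le (setIntegral_nonneg measurableSet_Ioi fun _ _ => (exp_pos _).le)

lemma millsRatio_zero : millsRatio 0 = √(2 * π) / 2 := by
  simp [millsRatio, integral_Ioi_zero_exp_neg_sq_div_two]

lemma hasDerivAt_integral_Ioi_exp_neg_sq_div_two (w : ℝ) :
    HasDerivAt (fun w => ∫ u in Ioi w, exp (-u ^ 2 / 2)) (-exp (-w ^ 2 / 2)) w := by
  have hsub : (fun w => ∫ u in Ioi w, exp (-u ^ 2 / 2)) =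
      fun w => (∫ u in Ioi 0, exp (-u ^ 2 / 2)) - ∫ u in (0 : ℝ)..w, exp (-u ^ 2 / 2) := by
    ext w
    rw [← intervalIntegral.integral_Ioi_sub_Ioi' integrable_exp_neg_sq_div_two.integrableOn
      integrable_exp_neg_sq_div_two.integrableOn, sub_sub_cancel]
  rw [hsub]
  exact ((Continuous.integral_hasStrictDerivAt (by fun_prop) 0 w).hasDerivAt).const_sub _

lemma hasDerivAt_millsRatio (w : ℝ) : HasDerivAt millsRatio (w * millsRatio w - 1) w := by
  have hexp : HasDerivAt (fun w : ℝ => exp (w ^ 2 / 2)) (w * exp (w ^ 2 / 2)) w :=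
    ((hasDerivAt_pow 2 w).div_const 2).exp.congr_deriv (by simp [mul_comm])
  refine (hexp.fun_mul (hasDerivAt_integral_Ioi_exp_neg_sq_div_two w)).congr_deriv ?_
  rw [millsRatio]
  linear_combination -exp_sq_div_two_mul_exp_neg w

lemma integrable_mul_exp_neg_sq_div_two : Integrable fun u : ℝ => u * exp (-u ^ 2 / 2) := by
  convert integrable_mul_exp_neg_mul_sq (b := 1 / 2) (by norm_num) using 4; ring

lemma integral_Ioi_mul_exp_neg_sq_div_two (w : ℝ) :
    ∫ u in Ioi w, u * exp (-u ^ 2 / 2) = exp (-w ^ 2 / 2) := by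
  have hderiv : ∀ u ∈ Ici w, HasDerivAt (fun u => -exp (-u ^ 2 / 2)) (u * exp (-u ^ 2 / 2)) u :=
    fun u _ => ((hasDerivAt_pow 2 u).fun_neg.div_const 2).exp.fun_neg.congr_deriv
      (by simp [neg_div, mul_comm])
  have hlim : Tendsto (fun u : ℝ => -exp (-u ^ 2 / 2)) atTop (𝓝 0) := by
    have : Tendsto (fun u : ℝ => -u ^ 2 / 2) atTop atBot := by
      simp_rw [neg_div]
      exact tendsto_neg_atTop_atBot.comp ((tendsto_pow_atTop two_ne_zero).atTop_div_const two_pos)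
    simpa using (tendsto_exp_atBot.comp this).neg
  rw [integral_Ioi_of_hasDerivAt_of_tendsto' hderiv
    integrable_mul_exp_neg_sq_div_two.integrableOn hlim]
  ring

lemma mul_millsRatio_le_one (w : ℝ) : w * millsRatio w ≤ 1 := by
  have htail : w * ∫ u in Ioi w, exp (-u ^ 2 / 2) ≤ exp (-w ^ 2 / 2) := by
    rw [← integral_Ioi_mul_exp_neg_sq_div_two, ← integral_const_mul]
    exact setIntegral_mono_on (integrable_exp_neg_sq_div_two.const_mul w).integrableOn
      integrable_mul_exp_neg_sq_div_two.integrableOn measurableSet_Ioi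
      fun u hu => mul_le_mul_of_nonneg_right (le_of_lt hu) (exp_pos _).le
  calc w * millsRatio w = exp (w ^ 2 / 2) * (w * ∫ u in Ioi w, exp (-u ^ 2 / 2)) := by
        rw [millsRatio]; ring
    _ ≤ exp (w ^ 2 / 2) * exp (-w ^ 2 / 2) := by gcongr
    _ = 1 := exp_sq_div_two_mul_exp_neg w

lemma millsRatio_le {w : ℝ} (hw : 0 ≤ w) : millsRatio w ≤ √(2 * π) / 2 := by
  have hanti : AntitoneOn millsRatio (Ici 0) :=
    antitoneOn_of_hasDerivWithinAt_nonpos (convex_Ici 0)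
      (fun x _ => (hasDerivAt_millsRatio x).continuousAt.continuousWithinAt)
      (fun x _ => (hasDerivAt_millsRatio x).hasDerivWithinAt)
      (fun x hx => by
        rw [interior_Ici] at hx
        linarith [mul_millsRatio_le_one x])
  exact millsRatio_zero ▸ hanti self_mem_Ici hw hw

lemma Phi_mul_millsRatio (t : ℝ) : Phi t * millsRatio t = (1 - Phi t) * millsRatio (-t) := by
  rw [one_sub_Phi_eq_integral_Ioi, Phi_eq_integral_Ioi, millsRatio, millsRatio, neg_sq]
  ring

lemma mul_millsRatio_le_millsRatio_abs {c t : ℝ} (hc₀ : 0 ≤ c) (hc : c ≤ Phi t) :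
    c * millsRatio t ≤ millsRatio |t| := by
  rcases le_or_gt 0 t with ht | ht
  · rw [abs_of_nonneg ht]
    exact mul_le_of_le_one_left (millsRatio_nonneg t) (hc.trans (Phi_le_one t))
  · rw [abs_of_neg ht]
    calc c * millsRatio t ≤ Phi t * millsRatio t := by gcongr; exact millsRatio_nonneg t
      _ = (1 - Phi t) * millsRatio (-t) := Phi_mul_millsRatio t
      _ ≤ millsRatio (-t) :=
        mul_le_of_le_one_left (millsRatio_nonneg _) (by linarith [Phi_nonneg t])

lemma abs_mul_millsRatio_second_deriv_le {c t : ℝ} (hc₀ : 0 ≤ c) (hc : c ≤ Phi t) :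
    |c * millsRatio t + t * (t * (c * millsRatio t) - c)| ≤ √(2 * π) / 2 + 2 * |t| := by
  set x := c * millsRatio t
  have hx₀ : 0 ≤ x := mul_nonneg hc₀ (millsRatio_nonneg t)
  have hx : x ≤ millsRatio |t| := mul_millsRatio_le_millsRatio_abs hc₀ hc
  have hc₁ : c ≤ 1 := hc.trans (Phi_le_one t)
  have htx : |t| * x ≤ 1 :=
    (mul_le_mul_of_nonneg_left hx (abs_nonneg t)).trans (mul_millsRatio_le_one |t|)
  calc |x + t * (t * x - c)| ≤ x + |t| * (|t| * x + c) := by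
        refine (abs_add_le _ _).trans ?_
        rw [abs_of_nonneg hx₀, abs_mul]
        gcongr
        refine (abs_sub _ _).trans ?_
        rw [abs_mul, abs_of_nonneg hx₀, abs_of_nonneg hc₀]
    _ ≤ √(2 * π) / 2 + 2 * |t| := by
        have := millsRatio_le (abs_nonneg t)
        nlinarith [abs_nonneg t]

noncomputable def steinUpper (s t : ℝ) : ℝ := Phi s * millsRatio t

noncomputable def steinLower (s t : ℝ) : ℝ := (1 - Phi s) * millsRatio (-t)

lemma integrable_steinG_integrand (s : ℝ) :
    Integrable fun u : ℝ => ((if u ≤ s then (1 : ℝ) else 0) - Phi s) * exp (-u ^ 2 / 2) := by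
  refine integrable_exp_neg_sq_div_two.bdd_mul (c := 1) ?_ (ae_of_all _ fun u => ?_)
  · exact ((measurable_const.ite measurableSet_Iic measurable_const).sub measurable_const)
      |>.aestronglyMeasurable
  · have := Phi_nonneg s; have := Phi_le_one s
    rw [Real.norm_eq_abs, abs_le]
    split_ifs <;> constructor <;> linarith

lemma integral_steinG_integrand (s : ℝ) :
    ∫ u, ((if u ≤ s then (1 : ℝ) else 0) - Phi s) * exp (-u ^ 2 / 2) = 0 := by
  have hIic : EqOn (fun u : ℝ => ((if u ≤ s then (1 : ℝ) else 0) - Phi s) * exp (-u ^ 2 / 2))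
      (fun u => (1 - Phi s) * exp (-u ^ 2 / 2)) (Iic s) := fun u hu => by
    simp only [if_pos (mem_Iic.mp hu)]
  have hIoi : EqOn (fun u : ℝ => ((if u ≤ s then (1 : ℝ) else 0) - Phi s) * exp (-u ^ 2 / 2))
      (fun u => -Phi s * exp (-u ^ 2 / 2)) (Ioi s) := fun u hu => by
    simp only [if_neg (not_le.mpr (mem_Ioi.mp hu)), zero_sub]
  have hint := integrable_steinG_integrand s
  rw [← intervalIntegral.integral_Iic_add_Ioi hint.integrableOn hint.integrableOn,
    setIntegral_congr_fun measurableSet_Iic hIic, setIntegral_congr_fun measurableSet_Ioi hIoi,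
    integral_const_mul, integral_const_mul]
  have hIic_eq := Phi_eq_integral_Iic s
  have hIoi_eq := one_sub_Phi_eq_integral_Ioi s
  rw [eq_div_iff (by positivity)] at hIic_eq hIoi_eq
  linear_combination -(1 - Phi s) * hIic_eq + Phi s * hIoi_eq

lemma steinG_of_le {s w : ℝ} (h : s ≤ w) : steinG s w = steinUpper s w := by
  have hIoi : EqOn (fun u : ℝ => ((if u ≤ s then (1 : ℝ) else 0) - Phi s) * exp (-u ^ 2 / 2))
      (fun u => -Phi s * exp (-u ^ 2 / 2)) (Ioi w) := fun u hu => by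
    simp only [if_neg (not_le.mpr (h.trans_lt hu)), zero_sub]
  have hint := integrable_steinG_integrand s
  have hsplit := intervalIntegral.integral_Iic_add_Ioi (b := w) hint.integrableOn hint.integrableOn
  rw [setIntegral_congr_fun measurableSet_Ioi hIoi, integral_const_mul,
    integral_steinG_integrand] at hsplit
  rw [steinG, steinUpper, millsRatio]
  linear_combination exp (w ^ 2 / 2) * hsplit

lemma steinG_of_ge {s w : ℝ} (h : w ≤ s) : steinG s w = steinLower s w := by
  have hIic : EqOn (fun u : ℝ => ((if u ≤ s then (1 : ℝ) else 0) - Phi s) * exp (-u ^ 2 / 2))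
      (fun u => (1 - Phi s) * exp (-(-u) ^ 2 / 2)) (Iic w) := fun u hu => by
    simp only [if_pos (mem_Iic.mp hu |>.trans h), neg_sq]
  rw [steinG, setIntegral_congr_fun measurableSet_Iic hIic, integral_const_mul,
    integral_comp_neg_Iic w fun u => exp (-u ^ 2 / 2), steinLower, millsRatio, neg_sq]
  ring

lemma steinLower_self (s : ℝ) : steinLower s s = steinUpper s s := (Phi_mul_millsRatio s).symm

lemma hasDerivAt_steinUpper (s t : ℝ) :
    HasDerivAt (steinUpper s) (t * steinUpper s t - Phi s) t :=
  ((hasDerivAt_millsRatio t).const_mul (Phi s)).congr_deriv (by rw [steinUpper]; ring)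

lemma hasDerivAt_steinLower (s t : ℝ) :
    HasDerivAt (steinLower s) (t * steinLower s t + (1 - Phi s)) t :=
  (((hasDerivAt_millsRatio (-t)).comp t (hasDerivAt_neg t)).const_mul (1 - Phi s)).congr_deriv
    (by rw [steinLower]; ring)

lemma hasDerivAt_deriv_steinUpper (s t : ℝ) :
    HasDerivAt (fun t => t * steinUpper s t - Phi s)
      (steinUpper s t + t * (t * steinUpper s t - Phi s)) t :=
  (((hasDerivAt_id t).fun_mul (hasDerivAt_steinUpper s t)).sub_const (Phi s)).congr_deriv
    (by simp)

lemma hasDerivAt_deriv_steinLower (s t : ℝ) :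
    HasDerivAt (fun t => t * steinLower s t + (1 - Phi s))
      (steinLower s t + t * (t * steinLower s t + (1 - Phi s))) t :=
  (((hasDerivAt_id t).fun_mul (hasDerivAt_steinLower s t)).add_const (1 - Phi s)).congr_deriv
    (by simp)

lemma abs_steinUpper_second_deriv_le {s t : ℝ} (h : s ≤ t) :
    |steinUpper s t + t * (t * steinUpper s t - Phi s)| ≤ √(2 * π) / 2 + 2 * |t| :=
  abs_mul_millsRatio_second_deriv_le (Phi_nonneg s) (Phi_mono h)

lemma abs_steinLower_second_deriv_le {s t : ℝ} (h : t ≤ s) :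
    |steinLower s t + t * (t * steinLower s t + (1 - Phi s))| ≤ √(2 * π) / 2 + 2 * |t| := by
  have hc : 1 - Phi s ≤ Phi (-t) := by rw [Phi_neg]; linarith [Phi_mono h]
  have := abs_mul_millsRatio_second_deriv_le (sub_nonneg.mpr (Phi_le_one s)) hc
  rw [abs_neg] at this
  convert this using 2
  rw [steinLower]
  ring

/-- Taylor-type estimate for the Stein solution across the singularity, case `b ≤ s < a`. -/
theorem steinG_taylor_cross_down (s a b : ℝ) (hb : b ≤ s) (ha : s < a) :
    |steinG s b - steinG s a - (a * steinG s a - Phi s) * (b - a) - (b - s)| ≤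
      2 * (Real.sqrt (2 * Real.pi) / 4 + |a| + (a - b)) * (a - b) ^ 2 := by
  have hC : ∀ t ∈ Icc b a,
      √(2 * π) / 2 + 2 * |t| ≤ 2 * (√(2 * π) / 4 + |a| + (a - b)) := fun t ht => by
    have : |t| ≤ |a| + (a - b) :=
      abs_le.mpr ⟨by linarith [neg_abs_le a, ht.1], by linarith [le_abs_self a, ht.2]⟩
    linarith
  have key := abs_sub_sub_mul_sub_sub_mul_le_of_jump (d := 1) hb ha.le
    (fun t _ => hasDerivAt_steinUpper s t) (fun t _ => hasDerivAt_deriv_steinUpper s t)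
    (fun t ht => (abs_steinUpper_second_deriv_le ht.1).trans (hC t ⟨hb.trans ht.1, ht.2⟩))
    (fun t _ => hasDerivAt_steinLower s t) (fun t _ => hasDerivAt_deriv_steinLower s t)
    (fun t ht => (abs_steinLower_second_deriv_le ht.2).trans (hC t ⟨ht.1, ht.2.trans ha.le⟩))
    (steinLower_self s) (by rw [steinLower_self]; ring)
  rw [steinG_of_ge hb, steinG_of_le ha.le]
  simpa only [one_mul] using key
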